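/- arXiv:2205.09329 — 3 statements merged into one kernel-verified Lean document; each statement's English description precedes it below -/
import Mathlib

section
/- Let N, n be positive integers, let ℓ₁, …, ℓₙ : ℝᴺ → ℝ and ℓ : ℝᴺ → ℝ be twice continuously differentiable, and let R(θ) = (1/n) Σᵢ₌₁ⁿ ℓᵢ(θ) be the empirical risk. Suppose θ : ℝ → ℝᴺ is differentiable at 0 and satisfies the stationarity condition ∇R(θ(δ)) + δ·∇ℓ(θ(δ)) = 0 for all δ in a neighborhood of 0. If the Hessian H = ∇²R(θ(0)) is invertible, then the influence of upweighting ℓ on the parameters is θ′(0) = −H⁻¹ ∇ℓ(θ(0)). -/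
/-!
Differentiate the stationarity identity `∇R(θ δ) + δ • ∇ℓ(θ δ) = 0` at `δ = 0`: the chain rule
gives `H θ'(0) + ∇ℓ(θ 0) = 0`, where the second term needs only continuity of `∇ℓ ∘ θ`, since
`δ • ∇ℓ(θ δ)` vanishes at `0` and its difference quotient is `∇ℓ(θ δ)` itself.
-/

open Filter Topology

theorem hasDerivAt_smul_self_of_continuousAt {F : Type*} [NormedAddCommGroup F]
    [NormedSpace ℝ F] {v : ℝ → F} (hv : ContinuousAt v 0) :
    HasDerivAt (fun t => t • v t) (v 0) 0 := by
  rw [hasDerivAt_iff_tendsto_slope]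
  refine (hv.mono_left nhdsWithin_le_nhds).congr' ?_
  filter_upwards [self_mem_nhdsWithin] with t (ht : t ≠ 0)
  simp [slope_def_module, smul_smul, ht]

theorem ContDiff.contDiff_gradient {F : Type*} [NormedAddCommGroup F]
    [InnerProductSpace ℝ F] [CompleteSpace F] {f : F → ℝ} {m n : WithTop ℕ∞}
    (hf : ContDiff ℝ n f) (hmn : m + 1 ≤ n) : ContDiff ℝ m (gradient f) :=
  (InnerProductSpace.toDual ℝ F).symm.toContinuousLinearEquiv.contDiff.comp
    (hf.fderiv_right hmn)

theorem deriv_eq_neg_symm_of_add_smul_eq_zero {E F : Type*} [NormedAddCommGroup E]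
    [NormedSpace ℝ E] [NormedAddCommGroup F] [NormedSpace ℝ F] {g : E → F} {x : ℝ → E}
    {v : ℝ → F} {H : E ≃L[ℝ] F} (hg : HasFDerivAt g (H : E →L[ℝ] F) (x 0))
    (hx : DifferentiableAt ℝ x 0) (hv : ContinuousAt v 0)
    (hstat : ∀ᶠ t in 𝓝 0, g (x t) + t • v t = 0) :
    deriv x 0 = -H.symm (v 0) := by
  have hderiv : HasDerivAt (fun t => g (x t) + t • v t) (H (deriv x 0) + v 0) 0 :=
    (hg.comp_hasDerivAt 0 hx.hasDerivAt).add (hasDerivAt_smul_self_of_continuousAt hv)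
  have hzero : H (deriv x 0) + v 0 = 0 :=
    (hderiv.congr_of_eventuallyEq (hstat.mono fun _ h => h.symm)).unique (hasDerivAt_const 0 0)
  rw [← map_neg, ContinuousLinearEquiv.eq_symm_apply]
  exact eq_neg_of_add_eq_zero_left hzero

theorem influence_param_of_upweighting_general
    (N n : ℕ)
    (ℓi : Fin n → EuclideanSpace ℝ (Fin N) → ℝ)
    (ℓ : EuclideanSpace ℝ (Fin N) → ℝ)
    (hℓi : ∀ i, ContDiff ℝ 2 (ℓi i)) (hℓ : ContDiff ℝ 2 ℓ)
    (R : EuclideanSpace ℝ (Fin N) → ℝ)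
    (hR : R = fun θ => (1 / n : ℝ) * ∑ i, ℓi i θ)
    (θ : ℝ → EuclideanSpace ℝ (Fin N))
    (hθ : DifferentiableAt ℝ θ 0)
    (hstat : ∀ᶠ δ in nhds (0 : ℝ),
      gradient R (θ δ) + δ • gradient ℓ (θ δ) = 0)
    (H : EuclideanSpace ℝ (Fin N) ≃L[ℝ] EuclideanSpace ℝ (Fin N))
    (hH : (H : EuclideanSpace ℝ (Fin N) →L[ℝ] EuclideanSpace ℝ (Fin N)) =
      fderiv ℝ (gradient R) (θ 0)) :
    deriv θ 0 = -(H.symm (gradient ℓ (θ 0))) := by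
  have hRc : ContDiff ℝ 2 R := hR ▸ contDiff_const.mul (ContDiff.sum fun i _ => hℓi i)
  have hgradR : ContDiff ℝ 1 (gradient R) := hRc.contDiff_gradient le_rfl
  have hgradℓ : ContDiff ℝ 1 (gradient ℓ) := hℓ.contDiff_gradient le_rfl
  refine deriv_eq_neg_symm_of_add_smul_eq_zero ?_ hθ
    (hgradℓ.continuous.continuousAt.comp hθ.continuousAt) hstat
  rw [hH]
  exact (hgradR.differentiable one_ne_zero _).hasFDerivAt

/-- **Influence of upweighting a loss on the parameters.**
If `θ δ` is a stationary point of the δ-reweighted objective `R + δ • ℓ` for all `δ`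
near `0`, `θ` is differentiable at `0`, and the Hessian `H = ∇²R(θ 0)` (the Fréchet
derivative of the gradient of the empirical risk `R` at `θ 0`) is invertible, then
`θ′(0) = -H⁻¹ ∇ℓ(θ 0)`. -/
theorem influence_param_of_upweighting
    (N n : ℕ) (hN : 0 < N) (hn : 0 < n)
    (ℓi : Fin n → EuclideanSpace ℝ (Fin N) → ℝ)
    (ℓ : EuclideanSpace ℝ (Fin N) → ℝ)
    (hℓi : ∀ i, ContDiff ℝ 2 (ℓi i)) (hℓ : ContDiff ℝ 2 ℓ)
    (R : EuclideanSpace ℝ (Fin N) → ℝ)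
    (hR : R = fun θ => (1 / n : ℝ) * ∑ i, ℓi i θ)
    (θ : ℝ → EuclideanSpace ℝ (Fin N))
    (hθ : DifferentiableAt ℝ θ 0)
    (hstat : ∀ᶠ δ in nhds (0 : ℝ),
      gradient R (θ δ) + δ • gradient ℓ (θ δ) = 0)
    (H : EuclideanSpace ℝ (Fin N) ≃L[ℝ] EuclideanSpace ℝ (Fin N))
    (hH : (H : EuclideanSpace ℝ (Fin N) →L[ℝ] EuclideanSpace ℝ (Fin N)) =
      fderiv ℝ (gradient R) (θ 0)) :
    deriv θ 0 = -(H.symm (gradient ℓ (θ 0))) :=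
  influence_param_of_upweighting_general N n ℓi ℓ hℓi hℓ R hR θ hθ hstat H hH
end

section
/- Let N, n, m be positive integers, let ℓ₁, …, ℓₙ : ℝᴺ → ℝ and ℓ̂₁, …, ℓ̂ₘ : ℝᴺ → ℝ be twice continuously differentiable, and let R(θ) = (1/n) Σᵢ₌₁ⁿ ℓᵢ(θ). Suppose θ : ℝᵐ → ℝᴺ is differentiable at 0 and satisfies the stationarity condition ∇R(θ(δ)) + Σⱼ₌₁ᵐ δⱼ·∇ℓ̂ⱼ(θ(δ)) = 0 for all δ in a neighborhood of 0 in ℝᵐ. If H = ∇²R(θ(0)) is invertible, then the Fréchet derivative Dθ(0) : ℝᵐ → ℝᴺ satisfies Dθ(0)(eⱼ) = −H⁻¹ ∇ℓ̂ⱼ(θ(0)) for every standard basis vector eⱼ; consequently, along the removal direction v = (−1/n, …, −1/n) ∈ ℝᵐ one has Dθ(0)(v) = (1/n) Σⱼ₌₁ᵐ H⁻¹ ∇ℓ̂ⱼ(θ(0)). -/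
/-!
Differentiating the stationarity identity `∇R(θ δ) + ∑ⱼ δⱼ ∇ℓ̂ⱼ(θ δ) = 0` at `δ = 0` by the chain
and product rules gives `H ∘ Dθ(0) + ∑ⱼ (δ ↦ δⱼ ∇ℓ̂ⱼ(θ 0)) = 0`, since the terms involving the
derivatives of `∇ℓ̂ⱼ ∘ θ` carry the factor `δⱼ = 0`. Inverting `H` gives
`Dθ(0) v = -H⁻¹ ∑ⱼ vⱼ ∇ℓ̂ⱼ(θ 0)` for every direction `v`; both claims are instances.
-/

open Topology InnerProductSpace

theorem ContDiff.differentiable_gradient {F : Type*} [NormedAddCommGroup F]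
    [InnerProductSpace ℝ F] [CompleteSpace F] {f : F → ℝ} (hf : ContDiff ℝ 2 f) :
    Differentiable ℝ (gradient f) :=
  (toDual ℝ F).symm.toContinuousLinearEquiv.differentiable.comp
    ((hf.fderiv_right le_rfl).differentiable one_ne_zero)

section Stationary

variable {ι F : Type*} [Fintype ι] [NormedAddCommGroup F] [NormedSpace ℝ F]
  {G : F → F} {g : ι → F → F} {θ : EuclideanSpace ℝ ι → F} {H : F ≃L[ℝ] F}

theorem hasFDerivAt_stationarity_map (hθ : DifferentiableAt ℝ θ 0)
    (hG : HasFDerivAt G (H : F →L[ℝ] F) (θ 0)) (hg : ∀ j, DifferentiableAt ℝ (g j) (θ 0)) :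
    HasFDerivAt (fun δ : EuclideanSpace ℝ ι => G (θ δ) + ∑ j, δ j • g j (θ δ))
      ((H : F →L[ℝ] F).comp (fderiv ℝ θ 0) +
        ∑ j, (EuclideanSpace.proj j : EuclideanSpace ℝ ι →L[ℝ] ℝ).smulRight (g j (θ 0))) 0 := by
  refine (hG.comp 0 hθ.hasFDerivAt).add (HasFDerivAt.fun_sum fun j _ => ?_)
  refine ((EuclideanSpace.proj (𝕜 := ℝ) j).hasFDerivAt.fun_smul
    ((hg j).hasFDerivAt.comp 0 hθ.hasFDerivAt)).congr_fderiv ?_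
  rw [map_zero, zero_smul, zero_add, Function.comp_apply]

theorem fderiv_apply_eq_of_stationary (hθ : DifferentiableAt ℝ θ 0)
    (hG : HasFDerivAt G (H : F →L[ℝ] F) (θ 0)) (hg : ∀ j, DifferentiableAt ℝ (g j) (θ 0))
    (hstat : ∀ᶠ δ in 𝓝 0, G (θ δ) + ∑ j, δ j • g j (θ δ) = 0) (v : EuclideanSpace ℝ ι) :
    fderiv ℝ θ 0 v = -H.symm (∑ j, v j • g j (θ 0)) := by
  have hzero := (hasFDerivAt_stationarity_map hθ hG hg).unique
    ((hasFDerivAt_const (0 : F) 0).congr_of_eventuallyEq hstat)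
  have hv : H (fderiv ℝ θ 0 v) + ∑ j, v j • g j (θ 0) = 0 := by
    simpa using congr($hzero v)
  rw [← H.symm_apply_apply (fderiv ℝ θ 0 v), eq_neg_of_add_eq_zero_left hv, map_neg]

end Stationary

theorem influence_param_of_subset_general
    (N n m : ℕ)
    (ℓi : Fin n → EuclideanSpace ℝ (Fin N) → ℝ)
    (ℓhat : Fin m → EuclideanSpace ℝ (Fin N) → ℝ)
    (hℓi : ∀ i, ContDiff ℝ 2 (ℓi i)) (hℓhat : ∀ j, ContDiff ℝ 2 (ℓhat j))
    (R : EuclideanSpace ℝ (Fin N) → ℝ)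
    (hR : R = fun θ => (1 / n : ℝ) * ∑ i, ℓi i θ)
    (θ : EuclideanSpace ℝ (Fin m) → EuclideanSpace ℝ (Fin N))
    (hθ : DifferentiableAt ℝ θ 0)
    (hstat : ∀ᶠ δ in nhds (0 : EuclideanSpace ℝ (Fin m)),
      gradient R (θ δ) + ∑ j, δ j • gradient (ℓhat j) (θ δ) = 0)
    (H : EuclideanSpace ℝ (Fin N) ≃L[ℝ] EuclideanSpace ℝ (Fin N))
    (hH : (H : EuclideanSpace ℝ (Fin N) →L[ℝ] EuclideanSpace ℝ (Fin N)) =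
      fderiv ℝ (gradient R) (θ 0)) :
    (∀ j : Fin m,
      fderiv ℝ θ 0 (EuclideanSpace.single j (1 : ℝ)) =
        -(H.symm (gradient (ℓhat j) (θ 0)))) ∧
    fderiv ℝ θ 0 ((WithLp.equiv 2 (Fin m → ℝ)).symm (fun _ => (-1 / n : ℝ))) =
      (1 / n : ℝ) • ∑ j, H.symm (gradient (ℓhat j) (θ 0)) := by
  have hR2 : ContDiff ℝ 2 R := hR ▸ contDiff_const.mul (ContDiff.sum fun i _ => hℓi i)
  have hG : HasFDerivAt (gradient R) (H : _ →L[ℝ] _) (θ 0) :=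
    hH ▸ (hR2.differentiable_gradient _).hasFDerivAt
  have hDθ := fderiv_apply_eq_of_stationary hθ hG
    (fun j => (hℓhat j).differentiable_gradient _) hstat
  refine ⟨fun j => ?_, ?_⟩
  · simp [hDθ]
  · rw [hDθ]
    simp [← Finset.smul_sum, neg_div]

/-- **Multi-dimensional parameter influence of a subset of losses.**
If `θ δ` is a stationary point of the δ-reweighted objective
`R + ∑ⱼ δⱼ • ℓhatⱼ` for all `δ` near `0` in `ℝᵐ`, `θ` is differentiable at `0`, and
the Hessian `H = ∇²R(θ 0)` is invertible, then the Fréchet derivative `Dθ(0)` maps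
each standard basis vector `eⱼ` to `-H⁻¹ ∇ℓhatⱼ(θ 0)`, and maps the removal direction
`v = (-1/n, …, -1/n)` to `(1/n) ∑ⱼ H⁻¹ ∇ℓhatⱼ(θ 0)`. -/
theorem influence_param_of_subset
    (N n m : ℕ) (hN : 0 < N) (hn : 0 < n) (hm : 0 < m)
    (ℓi : Fin n → EuclideanSpace ℝ (Fin N) → ℝ)
    (ℓhat : Fin m → EuclideanSpace ℝ (Fin N) → ℝ)
    (hℓi : ∀ i, ContDiff ℝ 2 (ℓi i)) (hℓhat : ∀ j, ContDiff ℝ 2 (ℓhat j))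
    (R : EuclideanSpace ℝ (Fin N) → ℝ)
    (hR : R = fun θ => (1 / n : ℝ) * ∑ i, ℓi i θ)
    (θ : EuclideanSpace ℝ (Fin m) → EuclideanSpace ℝ (Fin N))
    (hθ : DifferentiableAt ℝ θ 0)
    (hstat : ∀ᶠ δ in nhds (0 : EuclideanSpace ℝ (Fin m)),
      gradient R (θ δ) + ∑ j, δ j • gradient (ℓhat j) (θ δ) = 0)
    (H : EuclideanSpace ℝ (Fin N) ≃L[ℝ] EuclideanSpace ℝ (Fin N))
    (hH : (H : EuclideanSpace ℝ (Fin N) →L[ℝ] EuclideanSpace ℝ (Fin N)) =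
      fderiv ℝ (gradient R) (θ 0)) :
    (∀ j : Fin m,
      fderiv ℝ θ 0 (EuclideanSpace.single j (1 : ℝ)) =
        -(H.symm (gradient (ℓhat j) (θ 0)))) ∧
    fderiv ℝ θ 0 ((WithLp.equiv 2 (Fin m → ℝ)).symm (fun _ => (-1 / n : ℝ))) =
      (1 / n : ℝ) • ∑ j, H.symm (gradient (ℓhat j) (θ 0)) :=
  influence_param_of_subset_general N n m ℓi ℓhat hℓi hℓhat R hR θ hθ hstat H hH
end

section
/- Let N, n, m be positive integers, let ℓ₁, …, ℓₙ : ℝᴺ → ℝ and ℓ̂₁, …, ℓ̂ₘ : ℝᴺ → ℝ be twice continuously differentiable, and let R(θ) = (1/n) Σᵢ₌₁ⁿ ℓᵢ(θ). Suppose θ : ℝᵐ → ℝᴺ is differentiable at 0, satisfies ∇R(θ(δ)) + Σⱼ₌₁ᵐ δⱼ·∇ℓ̂ⱼ(θ(δ)) = 0 for all δ in a neighborhood of 0 in ℝᵐ, and H = ∇²R(θ(0)) is invertible. Let 𝓛 : ℝᴺ → ℝ be differentiable at θ̂ = θ(0), and suppose ‖Σⱼ₌₁ᵐ H⁻¹ ∇ℓ̂ⱼ(θ̂)‖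 ≤ ε for some ε ≥ 0. Then the directional derivative of 𝓛 ∘ θ at 0 along the removal direction v = (−1/n, …, −1/n) ∈ ℝᵐ satisfies |D(𝓛 ∘ θ)(0)(v)| ≤ (ε/n) · ‖∇𝓛(θ̂)‖. -/
/-!
Differentiating the stationarity identity `∇R(θ δ) + ∑ⱼ δⱼ ∇ℓ̂ⱼ(θ δ) = 0` at `δ = 0` in the
direction `v` gives `H (Dθ(0) v) + ∑ⱼ vⱼ ∇ℓ̂ⱼ(θ̂) = 0`. For the removal direction this makes
`Dθ(0) v = (1/n) ∑ⱼ H⁻¹ ∇ℓ̂ⱼ(θ̂)`, of norm at most `ε / n`; the chain rule writes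
`D(𝓛 ∘ θ)(0) v = ⟪∇𝓛(θ̂), Dθ(0) v⟫`, and Cauchy–Schwarz concludes.
-/

open InnerProductSpace Filter Topology
open scoped Gradient

theorem ContDiff.gradient {F : Type*} [NormedAddCommGroup F] [InnerProductSpace ℝ F]
    [CompleteSpace F] {f : F → ℝ} {m n : WithTop ℕ∞} (hf : ContDiff ℝ n f) (hmn : m + 1 ≤ n) :
    ContDiff ℝ m (∇ f) :=
  (toDual ℝ F).symm.toContinuousLinearEquiv.contDiff.comp (hf.fderiv_right hmn)

section Stationarity

variable {ι E F : Type*} [Fintype ι] [NormedAddCommGroup E] [NormedSpace ℝ E]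
  [NormedAddCommGroup F] [NormedSpace ℝ F]
  {θ : EuclideanSpace ℝ ι → E} {r : E → F} {g : ι → E → F}

theorem hasFDerivAt_add_sum_coord_smul {H : E →L[ℝ] F}
    (hθ : DifferentiableAt ℝ θ 0) (hr : HasFDerivAt r H (θ 0))
    (hg : ∀ j, DifferentiableAt ℝ (g j) (θ 0)) :
    HasFDerivAt (fun δ : EuclideanSpace ℝ ι => r (θ δ) + ∑ j, δ j • g j (θ δ))
      (H.comp (fderiv ℝ θ 0) + ∑ j, (EuclideanSpace.proj j).smulRight (g j (θ 0))) 0 := by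
  refine (hr.comp 0 hθ.hasFDerivAt).add (HasFDerivAt.fun_sum fun j _ => ?_)
  -- the coordinate `δ j` vanishes at `0`, so only its own derivative contributes
  refine ((EuclideanSpace.proj j : EuclideanSpace ℝ ι →L[ℝ] ℝ).hasFDerivAt.fun_smul
    ((hg j).comp 0 hθ).hasFDerivAt).congr_fderiv ?_
  simp

/-- With `r = ∇R` and `gⱼ = ∇ℓ̂ⱼ`, the right-hand side is `∑ⱼ vⱼ I_param(ẑⱼ)`. -/
theorem fderiv_apply_eq_sum_smul_neg_symm_of_eventually_eq_zero {H : E ≃L[ℝ] F}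
    (hθ : DifferentiableAt ℝ θ 0) (hr : HasFDerivAt r (H : E →L[ℝ] F) (θ 0))
    (hg : ∀ j, DifferentiableAt ℝ (g j) (θ 0))
    (hstat : ∀ᶠ δ in 𝓝 0, r (θ δ) + ∑ j, δ j • g j (θ δ) = 0) (v : EuclideanSpace ℝ ι) :
    fderiv ℝ θ 0 v = ∑ j, v j • -H.symm (g j (θ 0)) := by
  have hstat' : (fun δ : EuclideanSpace ℝ ι => r (θ δ) + ∑ j, δ j • g j (θ δ)) =ᶠ[𝓝 0]
      fun _ => 0 := hstat
  have hzero := (hasFDerivAt_add_sum_coord_smul hθ hr hg).fderiv.symm.trans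
    (hstat'.fderiv_eq.trans (fderiv_const_apply 0))
  have hv : H (fderiv ℝ θ 0 v) + ∑ j, v j • g j (θ 0) = 0 := by
    simpa using congrArg (· v) hzero
  rw [← H.symm_apply_apply (fderiv ℝ θ 0 v), eq_neg_of_add_eq_zero_left hv]
  simp only [map_neg, map_sum, map_smul, smul_neg, Finset.sum_neg_distrib]

end Stationarity

theorem abs_directional_derivative_le_of_influence_bound_general
    (N n m : ℕ)
    (ℓi : Fin n → EuclideanSpace ℝ (Fin N) → ℝ)
    (ℓhat : Fin m → EuclideanSpace ℝ (Fin N) → ℝ)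
    (hℓi : ∀ i, ContDiff ℝ 2 (ℓi i)) (hℓhat : ∀ j, ContDiff ℝ 2 (ℓhat j))
    (R : EuclideanSpace ℝ (Fin N) → ℝ)
    (hR : R = fun θ => (1 / n : ℝ) * ∑ i, ℓi i θ)
    (θ : EuclideanSpace ℝ (Fin m) → EuclideanSpace ℝ (Fin N))
    (hθ : DifferentiableAt ℝ θ 0)
    (hstat : ∀ᶠ δ in nhds (0 : EuclideanSpace ℝ (Fin m)),
      gradient R (θ δ) + ∑ j, δ j • gradient (ℓhat j) (θ δ) = 0)
    (H : EuclideanSpace ℝ (Fin N) ≃L[ℝ] EuclideanSpace ℝ (Fin N))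
    (hH : (H : EuclideanSpace ℝ (Fin N) →L[ℝ] EuclideanSpace ℝ (Fin N)) =
      fderiv ℝ (gradient R) (θ 0))
    (𝓛 : EuclideanSpace ℝ (Fin N) → ℝ)
    (h𝓛 : DifferentiableAt ℝ 𝓛 (θ 0))
    (ε : ℝ)
    (hinf : ‖∑ j, H.symm (gradient (ℓhat j) (θ 0))‖ ≤ ε) :
    |fderiv ℝ (fun δ => 𝓛 (θ δ)) 0
        ((WithLp.equiv 2 (Fin m → ℝ)).symm (fun _ => (-1 / n : ℝ)))| ≤
      (ε / n) * ‖gradient 𝓛 (θ 0)‖ := by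
  set v : EuclideanSpace ℝ (Fin m) := (WithLp.equiv 2 (Fin m → ℝ)).symm fun _ => (-1 / n : ℝ)
  have hR2 : ContDiff ℝ 2 R := hR ▸ contDiff_const.mul (ContDiff.sum fun i _ => hℓi i)
  have hHR : HasFDerivAt (∇ R) (H : _ →L[ℝ] _) (θ 0) :=
    hH ▸ ((hR2.gradient le_rfl).differentiable one_ne_zero (θ 0)).hasFDerivAt
  have hDθ : fderiv ℝ θ 0 v = (1 / n : ℝ) • ∑ j, H.symm (∇ (ℓhat j) (θ 0)) := by
    rw [fderiv_apply_eq_sum_smul_neg_symm_of_eventually_eq_zero hθ hHR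
      (fun j => ((hℓhat j).gradient le_rfl).differentiable one_ne_zero (θ 0)) hstat v,
      Finset.smul_sum]
    refine Finset.sum_congr rfl fun j _ => ?_
    rw [smul_neg, ← neg_smul, show v j = -1 / n from rfl, neg_div, neg_neg]
  have hDθ_norm : ‖fderiv ℝ θ 0 v‖ ≤ ε / n := by
    rw [hDθ, norm_smul, Real.norm_of_nonneg (by positivity), one_div_mul_eq_div]
    exact div_le_div_of_nonneg_right hinf n.cast_nonneg
  calc |fderiv ℝ (fun δ => 𝓛 (θ δ)) 0 v| = |⟪∇ 𝓛 (θ 0), fderiv ℝ θ 0 v⟫_ℝ| := by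
        rw [fderiv_fun_comp 0 h𝓛 hθ, ContinuousLinearMap.comp_apply, inner_gradient_left]
    _ ≤ ‖∇ 𝓛 (θ 0)‖ * ‖fderiv ℝ θ 0 v‖ := abs_real_inner_le_norm _ _
    _ ≤ ‖∇ 𝓛 (θ 0)‖ * (ε / n) := mul_le_mul_of_nonneg_left hDθ_norm (norm_nonneg _)
    _ = (ε / n) * ‖∇ 𝓛 (θ 0)‖ := mul_comm _ _

/-- **Bound on the directional derivative of the test loss along the removal direction.**
Under the stationarity condition for the δ-reweighted objective `R + ∑ⱼ δⱼ • ℓhatⱼ`,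
with invertible Hessian `H = ∇²R(θ 0)`, if the accumulated parameter influence satisfies
`‖∑ⱼ H⁻¹ ∇ℓhatⱼ(θhat)‖ ≤ ε`, then the directional derivative of the test loss `𝓛 ∘ θ`
at `0` along the removal direction `v = (-1/n, …, -1/n)` is bounded in absolute value by
`(ε/n) · ‖∇𝓛(θhat)‖`. -/
theorem abs_directional_derivative_le_of_influence_bound
    (N n m : ℕ) (hN : 0 < N) (hn : 0 < n) (hm : 0 < m)
    (ℓi : Fin n → EuclideanSpace ℝ (Fin N) → ℝ)
    (ℓhat : Fin m → EuclideanSpace ℝ (Fin N) → ℝ)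
    (hℓi : ∀ i, ContDiff ℝ 2 (ℓi i)) (hℓhat : ∀ j, ContDiff ℝ 2 (ℓhat j))
    (R : EuclideanSpace ℝ (Fin N) → ℝ)
    (hR : R = fun θ => (1 / n : ℝ) * ∑ i, ℓi i θ)
    (θ : EuclideanSpace ℝ (Fin m) → EuclideanSpace ℝ (Fin N))
    (hθ : DifferentiableAt ℝ θ 0)
    (hstat : ∀ᶠ δ in nhds (0 : EuclideanSpace ℝ (Fin m)),
      gradient R (θ δ) + ∑ j, δ j • gradient (ℓhat j) (θ δ) = 0)
    (H : EuclideanSpace ℝ (Fin N) ≃L[ℝ] EuclideanSpace ℝ (Fin N))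
    (hH : (H : EuclideanSpace ℝ (Fin N) →L[ℝ] EuclideanSpace ℝ (Fin N)) =
      fderiv ℝ (gradient R) (θ 0))
    (𝓛 : EuclideanSpace ℝ (Fin N) → ℝ)
    (h𝓛 : DifferentiableAt ℝ 𝓛 (θ 0))
    (ε : ℝ) (hε : 0 ≤ ε)
    (hinf : ‖∑ j, H.symm (gradient (ℓhat j) (θ 0))‖ ≤ ε) :
    |fderiv ℝ (fun δ => 𝓛 (θ δ)) 0
        ((WithLp.equiv 2 (Fin m → ℝ)).symm (fun _ => (-1 / n : ℝ)))| ≤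
      (ε / n) * ‖gradient 𝓛 (θ 0)‖ :=
  abs_directional_derivative_le_of_influence_bound_general N n m ℓi ℓhat hℓi hℓhat R hR θ hθ hstat H
    hH 𝓛 h𝓛 ε hinf
end
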